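/- arXiv:1709.09036 — 6 statements merged into one kernel-verified Lean document; each statement's English description precedes it below -/
import Mathlib

section
/- Fix p ∈ ℕ and let u, v ∈ ℕ^{<p} be finite sequences of naturals of length < p. Say u is above v if u_p >_lex v_p in the lexicographic order on (ω+1)^p, where u_p is u padded with ω's to length p. Then if u is above v, γ_p(u) > γ_p(v), where γ_p(u) = ⊕_{i<p} ω^{p-1-i}·(2·u_p(i)) (natural sum). -/
open Ordinal

/-- Natural (Hessenberg) addition of ordinals, as formerly defined in Mathlib
(`Mathlib.SetTheory.Ordinal.NaturalOps`, removed since). -/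
noncomputable def Ordinal.nadd (a b : Ordinal.{u}) : Ordinal.{u} :=
  max (⨆ x : Set.Iio a, Order.succ (Ordinal.nadd x.1 b))
    (⨆ x : Set.Iio b, Order.succ (Ordinal.nadd a x.1))
termination_by (a, b)
decreasing_by all_goals cases x; decreasing_tactic

infixl:65 " ♯ " => Ordinal.nadd

/-- The `i`-th entry of the sequence `u` padded on the right with copies of `ω`
to length `p` (entries lie in `ω + 1`). -/
noncomputable def pad (u : List ℕ) (i : ℕ) : Ordinal.{0} :=
  if h : i < u.length then (u.get ⟨i, h⟩ : Ordinal) else omega0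

/-- The natural (Hessenberg) sum `⊕_{i=j}^{p-1} ω^{p-1-i} · (2 · u_p(i))`. -/
noncomputable def gammaFrom (p j : ℕ) (u : List ℕ) : Ordinal :=
  ((List.range (p - j)).map fun k =>
    (omega0 : Ordinal) ^ (p - 1 - (j + k)) * (2 * pad u (j + k))).foldr (· ♯ ·) 0

/-- `γ_p(u) = ⊕_{i<p} ω^{p-1-i} · (2 · u_p(i))`. -/
noncomputable def gammaP (p : ℕ) (u : List ℕ) : Ordinal := gammaFrom p 0 u

/-- `u` is above `v`: the `ω`-padded sequence `u_p` is lexicographically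
strictly greater than `v_p` in `(ω+1)^p`. -/
def Above (p : ℕ) (u v : List ℕ) : Prop :=
  ∃ j < p, (∀ i < j, pad u i = pad v i) ∧ pad v j < pad u j

/-!
Below `ω ^ e` the natural sum is closed, and splitting both summands at `ω ^ e` into quotient and
remainder bounds `a ♯ b` by `ω ^ e * (a / ω ^ e ♯ b / ω ^ e) + (a % ω ^ e ♯ b % ω ^ e)`.
Consequently the tail `⊕_{i > j}` of `γ_p(w)` stays below `ω ^ (p - 1 - j) * 2`, which is exactly
the gap that the factor `2` opens between the `j`-th terms of `γ_p(v)` and `γ_p(u)` when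
`v_p(j) < u_p(j)`. On the common prefix the strict monotonicity of `♯` carries the inequality up
to `j = 0`.
-/

namespace Ordinal

universe u

variable {a b c P Q x y r : Ordinal.{u}}

theorem lt_nadd_iff : a < b ♯ c ↔ (∃ b' < b, a ≤ b' ♯ c) ∨ ∃ c' < c, a ≤ b ♯ c' := by
  rw [nadd]
  simp only [lt_max_iff, Ordinal.lt_iSup_iff, Order.lt_succ_iff, Subtype.exists, Set.mem_Iio,
    exists_prop]

theorem nadd_le_iff : b ♯ c ≤ a ↔ (∀ b' < b, b' ♯ c < a) ∧ ∀ c' < c, b ♯ c' < a := by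
  rw [← not_lt, lt_nadd_iff]
  simp only [not_or, not_exists, not_and, not_le]

theorem nadd_left_strictMono (a : Ordinal.{u}) : StrictMono (a ♯ ·) :=
  fun _ _ h => lt_nadd_iff.2 (Or.inr ⟨_, h, le_rfl⟩)

theorem nadd_right_strictMono (a : Ordinal.{u}) : StrictMono (· ♯ a) :=
  fun _ _ h => lt_nadd_iff.2 (Or.inl ⟨_, h, le_rfl⟩)

theorem le_self_nadd (a b : Ordinal.{u}) : a ≤ a ♯ b :=
  (nadd_right_strictMono b).le_apply

theorem natCast_nadd_natCast_le (m n : ℕ) : (m : Ordinal.{u}) ♯ n ≤ (m + n : ℕ) := by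
  induction m using Nat.strong_induction_on generalizing n with | _ m ihm =>
  induction n using Nat.strong_induction_on with | _ n ihn =>
  refine nadd_le_iff.2 ⟨fun a ha => ?_, fun b hb => ?_⟩
  · obtain ⟨m', rfl⟩ := lt_omega0.1 (ha.trans (natCast_lt_omega0 m))
    have hm : m' < m := by exact_mod_cast ha
    exact (ihm m' hm n).trans_lt (by exact_mod_cast (by omega : m' + n < m + n))
  · obtain ⟨n', rfl⟩ := lt_omega0.1 (hb.trans (natCast_lt_omega0 n))
    have hn : n' < n := by exact_mod_cast hb
    exact (ihn n' hn).trans_lt (by exact_mod_cast (by omega : m + n' < m + n))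

theorem div_lt_div_or_mod_lt_mod (h : a < b) (c : Ordinal.{u}) :
    a / c < b / c ∨ a / c = b / c ∧ a % c < b % c := by
  rcases (div_le_left h.le c).lt_or_eq with hq | hq
  · exact Or.inl hq
  · refine Or.inr ⟨hq, ?_⟩
    rw [← div_add_mod a c, ← div_add_mod b c, hq] at h
    exact (add_lt_add_iff_left _).1 h

theorem mul_add_lt_mul (hxy : x < y) (hr : r < P) : P * x + r < P * y :=
  calc P * x + r < P * x + P := (add_lt_add_iff_left _).2 hr
    _ = P * Order.succ x := (mul_succ P x).symm
    _ ≤ P * y := mul_le_mul_right (Order.succ_le_of_lt hxy) P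

theorem nadd_le_mul_div_nadd_add_mod_nadd (hP : IsPrincipal (· ♯ ·) P) (hP0 : P ≠ 0)
    (a b : Ordinal.{u}) : a ♯ b ≤ P * (a / P ♯ b / P) + (a % P ♯ b % P) := by
  have hmod : ∀ x y, x % P ♯ y % P < P := fun x y => hP (mod_lt x hP0) (mod_lt y hP0)
  induction a using WellFoundedLT.induction generalizing b with | _ a iha =>
  induction b using WellFoundedLT.induction with | _ b ihb =>
  refine nadd_le_iff.2 ⟨fun a' ha' => (iha a' ha' b).trans_lt ?_,
    fun b' hb' => (ihb b' hb').trans_lt ?_⟩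
  · rcases div_lt_div_or_mod_lt_mod ha' P with hq | ⟨hq, hr⟩
    · exact (mul_add_lt_mul (nadd_right_strictMono _ hq) (hmod _ _)).trans_le le_self_add
    · rw [hq]
      exact (add_lt_add_iff_left _).2 (nadd_right_strictMono _ hr)
  · rcases div_lt_div_or_mod_lt_mod hb' P with hq | ⟨hq, hr⟩
    · exact (mul_add_lt_mul (nadd_left_strictMono _ hq) (hmod _ _)).trans_le le_self_add
    · rw [hq]
      exact (add_lt_add_iff_left _).2 (nadd_left_strictMono _ hr)

theorem nadd_lt_mul_natCast_add (hP : IsPrincipal (· ♯ ·) P) (hP0 : P ≠ 0) {m k : ℕ}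
    (ha : a ≤ P * m) (hb : b < P * k) : a ♯ b < P * (m + k : ℕ) := by
  have ham : a / P ≤ m := div_le_of_le_mul ha
  have hbk : b / P < k := (lt_mul_iff_div_lt hP0).1 hb
  obtain ⟨m', hm'⟩ := lt_omega0.1 (ham.trans_lt (natCast_lt_omega0 m))
  obtain ⟨k', hk'⟩ := lt_omega0.1 (hbk.trans (natCast_lt_omega0 k))
  rw [hm', Nat.cast_le] at ham
  rw [hk', Nat.cast_lt] at hbk
  calc a ♯ b ≤ P * (a / P ♯ b / P) + (a % P ♯ b % P) :=
        nadd_le_mul_div_nadd_add_mod_nadd hP hP0 a b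
    _ < P * (m + k : ℕ) := by
      refine mul_add_lt_mul ?_ (hP (mod_lt a hP0) (mod_lt b hP0))
      rw [hm', hk']
      exact (natCast_nadd_natCast_le m' k').trans_lt
        (by exact_mod_cast (by omega : m' + k' < m + k))

theorem isPrincipal_nadd_one : IsPrincipal (· ♯ ·) (1 : Ordinal.{u}) := by
  intro a b ha hb
  rw [Order.lt_one_iff] at ha hb
  subst ha hb
  exact (nadd_le_iff.2 ⟨by simp, by simp⟩).trans_lt zero_lt_one

theorem isPrincipal_nadd_omega0 : IsPrincipal (· ♯ ·) ω := by
  intro a b ha hb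
  obtain ⟨m, rfl⟩ := lt_omega0.1 ha
  obtain ⟨n, rfl⟩ := lt_omega0.1 hb
  exact (natCast_nadd_natCast_le m n).trans_lt (natCast_lt_omega0 _)

theorem IsPrincipal.nadd_mul (hP : IsPrincipal (· ♯ ·) P) (hQ : IsPrincipal (· ♯ ·) Q)
    (hP0 : P ≠ 0) : IsPrincipal (· ♯ ·) (P * Q) := by
  intro a b ha hb
  calc a ♯ b ≤ P * (a / P ♯ b / P) + (a % P ♯ b % P) :=
        nadd_le_mul_div_nadd_add_mod_nadd hP hP0 a b
    _ < P * Q :=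
      mul_add_lt_mul (hQ ((lt_mul_iff_div_lt hP0).1 ha) ((lt_mul_iff_div_lt hP0).1 hb))
        (hP (mod_lt a hP0) (mod_lt b hP0))

theorem isPrincipal_nadd_omega0_pow (n : ℕ) : IsPrincipal (· ♯ ·) (ω ^ n : Ordinal.{u}) := by
  induction n with
  | zero => simpa using isPrincipal_nadd_one
  | succ n ih =>
    rw [pow_succ]
    exact ih.nadd_mul isPrincipal_nadd_omega0 (pow_ne_zero _ omega0_ne_zero)

end Ordinal

theorem pad_le_omega0 (u : List ℕ) (i : ℕ) : pad u i ≤ ω := by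
  unfold pad
  split
  · exact (natCast_lt_omega0 _).le
  · exact le_rfl

theorem two_mul_pad_le_omega0 (u : List ℕ) (i : ℕ) : 2 * pad u i ≤ ω := by
  unfold pad
  split
  · exact_mod_cast (natCast_lt_omega0 (2 * _)).le
  · exact_mod_cast (natCast_mul_omega0 two_pos).le

theorem gammaFrom_of_le {p j : ℕ} (w : List ℕ) (h : p ≤ j) : gammaFrom p j w = 0 := by
  simp [gammaFrom, Nat.sub_eq_zero_of_le h]

theorem gammaFrom_eq_nadd {p j : ℕ} (w : List ℕ) (h : j < p) :
    gammaFrom p j w = ω ^ (p - 1 - j) * (2 * pad w j) ♯ gammaFrom p (j + 1) w := by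
  rw [gammaFrom, gammaFrom, show p - j = p - (j + 1) + 1 by omega, List.range_succ_eq_map,
    List.map_cons, List.foldr_cons, List.map_map]
  congr 3
  funext k
  simp only [Function.comp_apply, show j + (k + 1) = j + 1 + k by omega]

theorem gammaFrom_lt_omega0_pow_mul_two (p j : ℕ) (w : List ℕ) :
    gammaFrom p j w < ω ^ (p - j) * 2 := by
  obtain ⟨d, hd⟩ : ∃ d, p - j = d := ⟨_, rfl⟩
  induction d generalizing j with
  | zero => simp [hd, gammaFrom_of_le w (Nat.sub_eq_zero_iff_le.1 hd)]
  | succ d ih =>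
    have hterm : ω ^ (p - 1 - j) * (2 * pad w j) ≤ ω ^ (d + 1) * (1 : ℕ) := by
      rw [Nat.cast_one, mul_one, pow_succ, show p - 1 - j = d by omega]
      exact mul_le_mul_right (two_mul_pad_le_omega0 w j) _
    have htail : gammaFrom p (j + 1) w < ω ^ (d + 1) * (1 : ℕ) := by
      refine (ih (j + 1) (by omega)).trans_le ?_
      rw [Nat.cast_one, mul_one, pow_succ, show p - (j + 1) = d by omega]
      exact mul_le_mul_right (mod_cast (natCast_lt_omega0 2).le) _
    rw [gammaFrom_eq_nadd w (by omega : j < p), hd]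
    simpa using nadd_lt_mul_natCast_add (isPrincipal_nadd_omega0_pow _)
      (pow_ne_zero _ omega0_ne_zero) hterm htail

theorem gammaFrom_lt_gammaFrom_of_pad_lt {p j : ℕ} {u v : List ℕ} (hj : j < p)
    (hlt : pad v j < pad u j) : gammaFrom p j v < gammaFrom p j u := by
  obtain ⟨n, hn⟩ := lt_omega0.1 (hlt.trans_le (pad_le_omega0 u j))
  have hsucc : ((n + 1 : ℕ) : Ordinal) ≤ pad u j := by
    rw [Nat.cast_succ]
    exact Order.add_one_le_of_lt (hn ▸ hlt)
  have htail : gammaFrom p (j + 1) v < ω ^ (p - 1 - j) * (2 : ℕ) := by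
    simpa [show p - (j + 1) = p - 1 - j by omega] using
      gammaFrom_lt_omega0_pow_mul_two p (j + 1) v
  rw [gammaFrom_eq_nadd v hj, gammaFrom_eq_nadd u hj, hn]
  calc ω ^ (p - 1 - j) * (2 * n) ♯ gammaFrom p (j + 1) v
      < ω ^ (p - 1 - j) * (2 * n + 2 : ℕ) :=
        nadd_lt_mul_natCast_add (isPrincipal_nadd_omega0_pow _) (pow_ne_zero _ omega0_ne_zero)
          (by push_cast; rfl) htail
    _ ≤ ω ^ (p - 1 - j) * (2 * pad u j) := by
        refine mul_le_mul_right ?_ _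
        calc ((2 * n + 2 : ℕ) : Ordinal) = 2 * ((n + 1 : ℕ) : Ordinal) := by
              push_cast; rw [mul_add, mul_one]
          _ ≤ 2 * pad u j := mul_le_mul_right hsucc _
    _ ≤ _ := le_self_nadd _ _

theorem gammaFrom_lt_gammaFrom {p i j : ℕ} {u v : List ℕ} (hj : j < p)
    (hpre : ∀ k < j, pad u k = pad v k) (hlt : pad v j < pad u j) (hij : i ≤ j) :
    gammaFrom p i v < gammaFrom p i u := by
  induction hij using Nat.decreasingInduction with
  | self => exact gammaFrom_lt_gammaFrom_of_pad_lt hj hlt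
  | of_succ k hk ih =>
    rw [gammaFrom_eq_nadd v (hk.trans hj), gammaFrom_eq_nadd u (hk.trans hj), hpre k hk]
    exact nadd_left_strictMono _ ih

theorem stmt_3_general (p : ℕ) (u v : List ℕ) (h : Above p u v) : gammaP p v < gammaP p u := by
  obtain ⟨j, hj, hpre, hlt⟩ := h
  exact gammaFrom_lt_gammaFrom hj hpre hlt j.zero_le

/-- If `u` is above `v` (padded lexicographic comparison), then `γ_p(u) > γ_p(v)`. -/
theorem stmt_3 (p : ℕ) (u v : List ℕ) (hu : u.length < p) (hv : v.length < p)
    (h : Above p u v) : gammaP p v < gammaP p u :=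
  stmt_3_general p u v h
end

section
/- The description 𝒜_n is ISCT: every idempotent graph G in the composition closure cl(𝒜_n) contains a strict arc x ↓ x. In fact, every composition G = G₀;G₁;⋯;G_{k-1} with each G_j ∈ 𝒜_n (k ≥ 1) contains the strict arc x_i ↓ x_i, where i is minimal such that A_i occurs among G₀,…,G_{k-1}. -/
open Classical

/-- Composition of size-change arc maps. -/
noncomputable def scomp {X Y Z : Type*} (G₀ : X → Y → Option Bool)
    (G₁ : Y → Z → Option Bool) : X → Z → Option Bool := fun x z =>
  if ∃ y, (G₀ x y = some true ∧ (G₁ y z).isSome) ∨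
      ((G₀ x y).isSome ∧ G₁ y z = some true) then some true
  else if ∃ y, G₀ x y = some false ∧ G₁ y z = some false then some false
  else none

/-- The size-change graph `A_j` of the description `𝒜_n`, on parameters
`x_0, …, x_n` (0-indexed): the strict arc `x_j ↓ x_j` and non-strict arcs
`x_i ⇓ x_i` for all `i < j`. -/
def Agraph (n : ℕ) (j : Fin (n + 1)) : Fin (n + 1) → Fin (n + 1) → Option Bool :=
  fun a b =>
    if a = b then
      (if a = j then some true else if a < j then some false else none)
    else none

lemma Agraph_ne_none {n : ℕ} {j a b : Fin (n+1)} (h : Agraph n j a b ≠ none) : a = b := by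
  by_contra hab
  simp [Agraph, hab] at h

lemma Agraph_isSome {n : ℕ} {j a : Fin (n+1)} (h : a ≤ j) :
    (Agraph n j a a).isSome := by
  rcases lt_or_eq_of_le h with h | h <;> simp [Agraph, h, ne_of_lt]

lemma Agraph_diag_true {n : ℕ} {j a : Fin (n+1)} (h : Agraph n j a a = some true) :
    a = j := by
  by_contra hj
  by_cases hl : a < j <;> simp [Agraph, hj, hl] at h

lemma Agraph_diag_some {n : ℕ} {j a : Fin (n+1)} (h : (Agraph n j a a).isSome) :
    a ≤ j := by
  by_contra hj
  have h1 : ¬ a = j := fun hh => hj (le_of_eq hh)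
  have h2 : ¬ a < j := fun hh => hj (le_of_lt hh)
  simp [Agraph, h1, h2] at h

lemma Agraph_diag_false {n : ℕ} {j a : Fin (n+1)} (h : Agraph n j a a = some false) :
    a < j := by
  by_contra hj
  by_cases he : a = j <;> simp [Agraph, he, hj] at h

lemma Agraph_comp (n : ℕ) (j j' : Fin (n+1)) :
    scomp (Agraph n j) (Agraph n j') = Agraph n (min j j') := by
  funext a b
  by_cases hab : a = b
  · subst hab
    have h1 : (∃ y, (Agraph n j a y = some true ∧ (Agraph n j' y a).isSome) ∨
        ((Agraph n j a y).isSome ∧ Agraph n j' y a = some true)) ↔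
        ((a = j ∧ a ≤ j') ∨ (a ≤ j ∧ a = j')) := by
      constructor
      · rintro ⟨y, ⟨hy1, hy2⟩ | ⟨hy1, hy2⟩⟩
        · have hya : a = y := Agraph_ne_none (j := j) (by rw [hy1]; simp)
          subst hya
          exact Or.inl ⟨Agraph_diag_true hy1, Agraph_diag_some hy2⟩
        · have hya : y = a := Agraph_ne_none (j := j') (by rw [hy2]; simp)
          subst hya
          exact Or.inr ⟨Agraph_diag_some hy1, Agraph_diag_true hy2⟩
      · rintro (⟨h1, h2⟩ | ⟨h1, h2⟩)
        · exact ⟨a, Or.inl ⟨by simp [Agraph, h1], Agraph_isSome h2⟩⟩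
        · exact ⟨a, Or.inr ⟨Agraph_isSome h1, by simp [Agraph, h2]⟩⟩
    have h2 : (∃ y, Agraph n j a y = some false ∧ Agraph n j' y a = some false) ↔
        (a < j ∧ a < j') := by
      constructor
      · rintro ⟨y, hy1, hy2⟩
        have hya : a = y := Agraph_ne_none (j := j) (by rw [hy1]; simp)
        subst hya
        exact ⟨Agraph_diag_false hy1, Agraph_diag_false hy2⟩
      · rintro ⟨h1, h2⟩
        exact ⟨a, by simp [Agraph, ne_of_lt h1, h1], by simp [Agraph, ne_of_lt h2, h2]⟩
    rw [scomp]
    simp only [h1, h2]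
    by_cases ham : a = min j j'
    · have hj : a ≤ j := ham ▸ min_le_left j j'
      have hj' : a ≤ j' := ham ▸ min_le_right j j'
      have : (a = j ∧ a ≤ j') ∨ (a ≤ j ∧ a = j') := by
        rcases le_total j j' with h | h
        · exact Or.inl ⟨le_antisymm hj (by rw [ham, min_eq_left h]), hj'⟩
        · exact Or.inr ⟨hj, le_antisymm hj' (by rw [ham, min_eq_right h])⟩
      rw [if_pos this]
      simp [Agraph, ham]
    · by_cases hlt : a < min j j'
      · have hj : a < j := lt_of_lt_of_le hlt (min_le_left j j')
        have hj' : a < j' := lt_of_lt_of_le hlt (min_le_right j j')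
        have hne : ¬ ((a = j ∧ a ≤ j') ∨ (a ≤ j ∧ a = j')) := by
          rintro (⟨h, -⟩ | ⟨-, h⟩)
          · exact absurd (h ▸ hj) (lt_irrefl _)
          · exact absurd (h ▸ hj') (lt_irrefl _)
        rw [if_neg hne, if_pos ⟨hj, hj'⟩]
        simp [Agraph, ham, hlt]
      · have hnm : ¬ a ≤ min j j' := fun h =>
          (lt_or_eq_of_le h).elim hlt ham
        have hne1 : ¬ ((a = j ∧ a ≤ j') ∨ (a ≤ j ∧ a = j')) := by
          rintro (⟨h1, h2⟩ | ⟨h1, h2⟩)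
          · exact hnm (le_min (le_of_eq h1) h2)
          · exact hnm (le_min h1 (le_of_eq h2))
        have hne2 : ¬ (a < j ∧ a < j') := fun ⟨h1, h2⟩ =>
          hnm (le_min (le_of_lt h1) (le_of_lt h2))
        rw [if_neg hne1, if_neg hne2]
        simp [Agraph, ham, hlt]
  · rw [scomp]
    have e1 : ¬ ∃ y, (Agraph n j a y = some true ∧ (Agraph n j' y b).isSome) ∨
        ((Agraph n j a y).isSome ∧ Agraph n j' y b = some true) := by
      rintro ⟨y, ⟨hy1, hy2⟩ | ⟨hy1, hy2⟩⟩
      · have h1 : a = y := Agraph_ne_none (j := j) (by rw [hy1]; simp)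
        have h2 : y = b := Agraph_ne_none (j := j')
          (fun hn => by rw [hn] at hy2; simp at hy2)
        exact hab (h1.trans h2)
      · have h1 : a = y := Agraph_ne_none (j := j)
          (fun hn => by rw [hn] at hy1; simp at hy1)
        have h2 : y = b := Agraph_ne_none (j := j') (by rw [hy2]; simp)
        exact hab (h1.trans h2)
    have e2 : ¬ ∃ y, Agraph n j a y = some false ∧ Agraph n j' y b = some false := by
      rintro ⟨y, hy1, hy2⟩
      exact hab ((Agraph_ne_none (j := j) (by rw [hy1]; simp)).trans
        (Agraph_ne_none (j := j') (by rw [hy2]; simp)))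
    rw [if_neg e1, if_neg e2]
    simp [Agraph, hab]

/-- The description `𝒜_n` is ISCT; in fact, every composition
`G = A_{j₀}; A_{j₁}; ⋯ ; A_{j_{k-1}}` (`k ≥ 1`) of graphs from `𝒜_n` contains
the strict arc `x_i ↓ x_i`, where `i` is minimal such that `A_i` occurs among
the composed graphs. In particular every idempotent graph in `cl(𝒜_n)`
contains a strict arc `x ↓ x`. -/
theorem stmt_12 (n : ℕ) (j : Fin (n + 1)) (rest : List (Fin (n + 1))) :
    ((rest.map (Agraph n)).foldl scomp (Agraph n j)) (rest.foldl min j)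
      (rest.foldl min j) = some true := by
  have key : ∀ (rest : List (Fin (n+1))) (j : Fin (n+1)),
      (rest.map (Agraph n)).foldl scomp (Agraph n j) = Agraph n (rest.foldl min j) := by
    intro rest
    induction rest with
    | nil => intro j; rfl
    | cons a l ih =>
      intro j
      simp only [List.map_cons, List.foldl_cons, Agraph_comp]
      exact ih (min j a)
  rw [key]
  simp [Agraph]
end

section
/- There is no infinite sequence of state transitions compatible with an MSCT description when parameter values are natural numbers: if 𝒢 is MSCT (every infinite multipath contains an infinite descent) and (f₀,u₀) →_{G₀} (f₁,u₁) →_{G₁} ⋯ is an infinite sequence of valuations with G_i ∈ 𝒢 and each transition respecting the arcs (strict arcs force strict decrease, non-strict arcs force weak decrease of the corresponding natural-number parameter values), then we reach a contradiction; i.e., no such infinite sequence exists. -/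
/-- `(f,u) →_G (g,v)`: strict arcs (`some true`) force strict decrease and
non-strict arcs (`some false`) force weak decrease of parameter values. -/
def STrans {X Y : Type*} (G : X → Y → Option Bool) (u : X → ℕ) (v : Y → ℕ) : Prop :=
  ∀ x y, (G x y = some true → v y < u x) ∧ (G x y = some false → v y ≤ u x)

/-- An infinite multipath `M` admits an infinite descent: a threshold `t` and a
choice of parameters `x i` with an arc `x i → x (i+1)` in `M i` for all `i ≥ t`,
infinitely many of them strict. -/
def InfDescent {P : Type*} (M : ℕ → (P → P → Option Bool)) : Prop :=
  ∃ t : ℕ, ∃ x : ℕ → P,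
    (∀ i ≥ t, M i (x i) (x (i + 1)) ≠ none) ∧
    (∀ s, ∃ i ≥ s, t ≤ i ∧ M i (x i) (x (i + 1)) = some true)

/-- `𝒢` is MSCT: every infinite multipath over `𝒢` contains an infinite descent. -/
def MSCT {P : Type*} (S : Set (P → P → Option Bool)) : Prop :=
  ∀ M : ℕ → (P → P → Option Bool), (∀ i, M i ∈ S) → InfDescent M

/-- If `𝒢` is MSCT, then there is no infinite sequence of state transitions
with natural-number parameter values compatible with graphs from `𝒢`. -/
theorem stmt_13 {P : Type*} (S : Set (P → P → Option Bool)) (hS : MSCT S)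
    (M : ℕ → (P → P → Option Bool)) (hM : ∀ i, M i ∈ S)
    (u : ℕ → (P → ℕ)) (htrans : ∀ i, STrans (M i) (u i) (u (i + 1))) :
    False := by
  obtain ⟨t, x, harc, hstr⟩ := hS M hM
  -- one-step weak decrease
  have hstep : ∀ i ≥ t, u (i + 1) (x (i + 1)) ≤ u i (x i) := by
    intro i hi
    have h := htrans i (x i) (x (i + 1))
    have := harc i hi
    rcases hb : M i (x i) (x (i + 1)) with _ | b
    · exact absurd hb this
    · cases b
      · exact h.2 hb
      · exact le_of_lt (h.1 hb)
  have hmono : ∀ i ≥ t, ∀ j, i ≤ j → u j (x j) ≤ u i (x i) := by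
    intro i hi j hij
    induction j with
    | zero =>
      have h0 : i = 0 := Nat.le_zero.mp hij
      rw [h0]
    | succ k ih =>
      rcases Nat.lt_or_ge i (k + 1) with h | h
      · have hk : i ≤ k := Nat.lt_succ_iff.mp h
        exact le_trans (hstep k (le_trans hi hk)) (ih hk)
      · have : i = k + 1 := le_antisymm hij h
        rw [this]
  have key : ∀ k, ∃ i ≥ t, u i (x i) + k ≤ u t (x t) := by
    intro k
    induction k with
    | zero => exact ⟨t, le_refl t, by omega⟩
    | succ n ih =>
      obtain ⟨i, hi, hle⟩ := ih
      obtain ⟨j, hji, hjt, hjs⟩ := hstr i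
      have h1 : u (j + 1) (x (j + 1)) < u j (x j) :=
        (htrans j (x j) (x (j + 1))).1 hjs
      have h2 : u j (x j) ≤ u i (x i) := hmono i hi j hji
      exact ⟨j + 1, by omega, by omega⟩
  obtain ⟨i, _, h⟩ := key (u t (x t) + 1)
  omega
end

section
/- For the fast-growing hierarchy relative to f (defined via one-step computation K_f on pairs (σ, x) of a finite sequence of ordinal notations below ε₀ and a natural number), the associated ordinal h(σ,x) = ω^{σ₀} + ⋯ + ω^{σ_n} (natural/ordinary sum along the stack, h(⟨⟩,x)=0) strictly decreases at each computation step as long as it is positive: if h(K_f(σ,x)) is defined and h(σ,x) > 0, then h(σ,x) > h(K_f(σ,x)). -/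
open Ordinal

/-- One step `K_f` of the canonical computation of the fast-growing hierarchy
relative to `f`, on a stack of ordinal notations below `ε₀` (head = topmost
entry `α_n`) together with a natural number argument:
`K_f(α₀…α_n, x) = (α₀…α_{n-1}, f(x))` if `α_n = 0`;
`(α₀…α_{n-1} β…β (x+1 copies), 1)` if `α_n = β+1`;
`(α₀…α_{n-1} α_n[x], x)` if `α_n` is a limit; and `K_f(⟨⟩, x) = (⟨⟩, x)`. -/
def Kstep (f : ℕ → ℕ) : List ONote × ℕ → List ONote × ℕ
  | ([], x) => ([], x)
  | (α :: rest, x) =>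
    match α.fundamentalSequence with
    | Sum.inl none => (rest, f x)
    | Sum.inl (some β) => (List.replicate (x + 1) β ++ rest, 1)
    | Sum.inr g => (g x :: rest, x)

/-- The ordinal `h(α₀…α_n, x) = ω^{α₀} + ⋯ + ω^{α_n}` associated to a stack
(head of the list is the topmost entry `α_n`); `h(⟨⟩, x) = 0`. -/
noncomputable def hOrd (σ : List ONote) : Ordinal.{0} :=
  σ.foldr (fun α acc => acc + omega0 ^ α.repr) 0

/-- `F_{α,f}(x) = y`: the iteration of the one-step computation `K_f` starting
from `(⟨α⟩, x)` reaches the empty stack with value `y`. -/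
def Fval (f : ℕ → ℕ) (α : ONote) (x y : ℕ) : Prop :=
  ∃ l : ℕ, (Kstep f)^[l] ([α], x) = ([], y)

/-
Only the top entry `α` of the stack changes, and its contribution `ω^α` is the last summand of
`h`, so it suffices that the replacement is smaller than `ω^α`: it is `0` when `α = 0`,
`ω^β · (x+1) < ω^(β+1)` when `α = β + 1`, and `ω^(α[x]) < ω^α` when `α` is a limit.
-/

lemma hOrd_cons (α : ONote) (l : List ONote) :
    hOrd (α :: l) = hOrd l + ω ^ α.repr := rfl

lemma hOrd_replicate_append (n : ℕ) (β : ONote) (l : List ONote) :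
    hOrd (List.replicate n β ++ l) = hOrd l + ω ^ β.repr * n := by
  induction n with
  | zero => simp [hOrd]
  | succ n ih =>
    rw [List.replicate_succ, List.cons_append, hOrd_cons, ih, Nat.cast_succ, mul_add, mul_one,
      add_assoc]

theorem hOrd_Kstep_cons_lt (f : ℕ → ℕ) (α : ONote) (rest : List ONote) (x : ℕ) :
    hOrd (Kstep f (α :: rest, x)).1 < hOrd (α :: rest) := by
  have hfs := ONote.fundamentalSequence_has_prop α
  rcases e : α.fundamentalSequence with (_ | β) | g <;> rw [e] at hfs <;>
    simp only [Kstep, e, hOrd_cons]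
  case inl.none =>
    exact lt_add_of_pos_right _ (opow_pos _ omega0_pos)
  case inl.some =>
    rw [hOrd_replicate_append, add_lt_add_iff_left, hfs.1]
    exact opow_mul_lt_opow (natCast_lt_omega0 _) (Order.lt_succ _)
  case inr =>
    rw [add_lt_add_iff_left]
    exact (opow_lt_opow_iff_right one_lt_omega0).2 (ONote.lt_def.1 (hfs.2.1 x).2.1)

theorem stmt_15_general (f : ℕ → ℕ) (σ : List ONote) (x : ℕ)
    (hpos : 0 < hOrd σ) :
    hOrd (Kstep f (σ, x)).1 < hOrd σ := by
  cases σ with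
  | nil => exact absurd hpos (lt_irrefl 0)
  | cons α rest => exact hOrd_Kstep_cons_lt f α rest x

/-- The associated ordinal strictly decreases at each computation step of `K_f`
as long as it is positive. -/
theorem stmt_15 (f : ℕ → ℕ) (σ : List ONote) (x : ℕ)
    (hNF : ∀ α ∈ σ, α.NF) (hpos : 0 < hOrd σ) :
    hOrd (Kstep f (σ, x)).1 < hOrd σ :=
  stmt_15_general f σ x hpos
end

section
/- The fast-growing hierarchy satisfies the recursion equations: F_{0,f}(x) = f(x); F_{α+1,f}(x) = F_{α,f}^{(x+1)}(1) (the (x+1)-fold iterate applied to 1); and F_{λ,f}(x) = F_{λ[x],f}(x) for λ a limit, whenever the relevant computations terminate; where F_{α,f} is defined via the iterated one-step computation K_f. -/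
open Ordinal

/-!
Write `KReaches f p y` for "iterating `K_f` from `p` reaches `(⟨⟩, y)`". Because `(⟨⟩, y)` is a
fixed point of `K_f`, `KReaches` is invariant under one step of `K_f`, and running a concatenated
stack amounts to running its top part to the empty stack and then the rest. Each recursion
equation is then one step of `K_f` followed by this decomposition (for `α + 1`, applied to
`x + 1` copies of `α`).
-/

open Function

theorem exists_iterate_eq_iff_of_isFixedPt {X : Type*} {T : X → X} {t : X}
    (ht : IsFixedPt T t) (p : X) : (∃ l, T^[l] (T p) = t) ↔ ∃ l, T^[l] p = t := by
  constructor
  · rintro ⟨l, hl⟩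
    exact ⟨l + 1, by rwa [iterate_succ_apply]⟩
  · rintro ⟨_ | l, hl⟩
    · exact ⟨0, hl ▸ ht⟩
    · exact ⟨l, by rwa [iterate_succ_apply] at hl⟩

theorem ONote.fundamentalSequence_add_one {α : ONote} (h : α.NF) :
    (α + 1).fundamentalSequence = Sum.inl (some α) := by
  have hrepr : (α + 1).repr = Order.succ α.repr := by
    rw [ONote.repr_add, ONote.repr_one, Nat.cast_one, Order.succ_eq_add_one]
  have hprop := ONote.fundamentalSequence_has_prop (α + 1)
  rcases hfs : (α + 1).fundamentalSequence with (_ | β) | g <;> rw [hfs] at hprop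
  · have := congrArg ONote.repr hprop
    rw [hrepr, ONote.repr_zero] at this
    exact absurd this (Order.succ_ne_bot _)
  · obtain ⟨hβ, hβNF⟩ := hprop
    rw [hrepr] at hβ
    have hβα : β.repr = α.repr := Order.succ_injective hβ.symm
    have : β.NF := hβNF inferInstance
    rw [ONote.repr_inj.mp hβα]
  · exact absurd (hrepr ▸ hprop.1) (Order.not_isSuccLimit_succ _)

section Kstep

variable (f : ℕ → ℕ)

def KReaches (p : List ONote × ℕ) (y : ℕ) : Prop :=
  ∃ l : ℕ, (Kstep f)^[l] p = ([], y)

variable {f}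

theorem fval_iff_kReaches {α : ONote} {x y : ℕ} : Fval f α x y ↔ KReaches f ([α], x) y :=
  Iff.rfl

theorem kReaches_kstep_iff (p : List ONote × ℕ) (y : ℕ) :
    KReaches f (Kstep f p) y ↔ KReaches f p y :=
  exists_iterate_eq_iff_of_isFixedPt (show Kstep f ([], y) = ([], y) from rfl) p

theorem kReaches_nil_iff {x y : ℕ} : KReaches f ([], x) y ↔ x = y := by
  refine ⟨fun ⟨l, hl⟩ => ?_, fun h => ⟨0, h ▸ rfl⟩⟩
  rw [iterate_fixed rfl] at hl
  exact (Prod.mk.inj hl).2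

theorem kstep_cons_append (α : ONote) (τ σ : List ONote) (x : ℕ) :
    Kstep f (α :: τ ++ σ, x) = Prod.map (· ++ σ) id (Kstep f (α :: τ, x)) := by
  rcases h : α.fundamentalSequence with (_ | β) | g <;> simp [Kstep, h]

-- The paper's `σ⌢τ` is `τ ++ σ` here: the head of the list is the top of the stack.
theorem kReaches_append_iff {τ σ : List ONote} {x y : ℕ} :
    KReaches f (τ ++ σ, x) y ↔ ∃ z, KReaches f (τ, x) z ∧ KReaches f (σ, z) y := by
  constructor
  · rintro ⟨l, hl⟩
    induction l generalizing τ x with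
    | zero =>
      obtain ⟨hτσ, rfl⟩ := Prod.mk.inj hl
      obtain ⟨rfl, rfl⟩ := List.append_eq_nil_iff.mp hτσ
      exact ⟨x, kReaches_nil_iff.mpr rfl, ⟨0, rfl⟩⟩
    | succ l ih =>
      rcases τ with _ | ⟨α, τ⟩
      · exact ⟨x, kReaches_nil_iff.mpr rfl, ⟨l + 1, hl⟩⟩
      rw [iterate_succ_apply, kstep_cons_append] at hl
      obtain ⟨z, hτ, hσ⟩ := ih hl
      exact ⟨z, (kReaches_kstep_iff _ z).mp hτ, hσ⟩
  · rintro ⟨z, ⟨l, hl⟩, hσ⟩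
    induction l generalizing τ x with
    | zero =>
      obtain ⟨rfl, rfl⟩ := Prod.mk.inj hl
      exact hσ
    | succ l ih =>
      rcases τ with _ | ⟨α, τ⟩
      · obtain rfl := kReaches_nil_iff.mp ⟨l + 1, hl⟩
        exact hσ
      rw [iterate_succ_apply] at hl
      rw [← kReaches_kstep_iff, kstep_cons_append]
      generalize Kstep f (α :: τ, x) = p at hl ⊢
      exact ih hl

theorem kReaches_replicate_iff (α : ONote) (n : ℕ) {x y : ℕ} :
    KReaches f (List.replicate n α, x) y ↔
      ∃ z : ℕ → ℕ, z 0 = x ∧ (∀ i < n, Fval f α (z i) (z (i + 1))) ∧ y = z n := by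
  induction n generalizing x with
  | zero =>
    rw [List.replicate_zero, kReaches_nil_iff]
    exact ⟨fun h => ⟨fun _ => x, rfl, nofun, h.symm⟩, fun ⟨z, hz0, _, hy⟩ => hz0 ▸ hy.symm⟩
  | succ n ih =>
    rw [List.replicate_succ, ← List.singleton_append, kReaches_append_iff]
    constructor
    · rintro ⟨w, hw, hrest⟩
      obtain ⟨z, rfl, hz, rfl⟩ := ih.mp hrest
      refine ⟨fun | 0 => x | i + 1 => z i, rfl, ?_, rfl⟩
      rintro (_ | i) hi
      exacts [hw, hz i (Nat.lt_of_succ_lt_succ hi)]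
    · rintro ⟨z, rfl, hz, rfl⟩
      exact ⟨z 1, hz 0 n.succ_pos,
        ih.mpr ⟨(z <| · + 1), rfl, fun i hi => hz (i + 1) (Nat.succ_lt_succ hi), rfl⟩⟩

end Kstep

/-- The fast-growing hierarchy defined via `K_f` satisfies the recursion
equations: `F_{0,f}(x) = f(x)`; `F_{α+1,f}(x) = F_{α,f}^{(x+1)}(1)`; and
`F_{λ,f}(x) = F_{λ[x],f}(x)` for `λ` a limit, whenever the relevant
computations terminate. -/
theorem stmt_17 (f : ℕ → ℕ) :
    (∀ x y : ℕ, Fval f 0 x y ↔ y = f x) ∧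
    (∀ (α : ONote) (x y : ℕ), α.NF →
      (Fval f (α + 1) x y ↔
        ∃ z : ℕ → ℕ, z 0 = 1 ∧ (∀ i < x + 1, Fval f α (z i) (z (i + 1))) ∧
          y = z (x + 1))) ∧
    (∀ (α : ONote) (g : ℕ → ONote) (x y : ℕ), α.NF →
      α.fundamentalSequence = Sum.inr g → (Fval f α x y ↔ Fval f (g x) x y)) := by
  refine ⟨fun x y => ?_, fun α x y hα => ?_, fun α g x y _ hg => ?_⟩
  · have hstep : Kstep f ([0], x) = ([], f x) := rfl
    rw [fval_iff_kReaches, ← kReaches_kstep_iff, hstep, kReaches_nil_iff, eq_comm]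
  · have hstep : Kstep f ([α + 1], x) = (List.replicate (x + 1) α, 1) := by
      simp [Kstep, ONote.fundamentalSequence_add_one hα]
    rw [fval_iff_kReaches, ← kReaches_kstep_iff, hstep, kReaches_replicate_iff]
  · have hstep : Kstep f ([α], x) = ([g x], x) := by simp [Kstep, hg]
    rw [fval_iff_kReaches, ← kReaches_kstep_iff, hstep]
    rfl
end

section
/- Define the generalized Péter–Ackermann function A^n_f : ℕ^{n+1} → ℕ (relativized to f : ℕ → ℕ) by well-founded recursion on the ordinal α(x⃗) = ω^{n-1}·x₁ + ⋯ + ω·x_{n-1} + x_n paired lexicographically with y: A^n_f(x⃗,y) = f(y) if α(x⃗)=0; A^n_f(x⃗', y) if α(x⃗) is a limit and α(x⃗') = α(x⃗)[y]; A^n_f(x⃗−1, 1) if α(x⃗) is a successor and y = 0; and A^n_f(x⃗−1, A^n_f(x⃗, y−1)) if α(x⃗) is a successor and y > 0. Then A^n_f(x⃗, y) = F_{α(x⃗), f}(y), the fast-growing hierarchy relative to f at ordinal α(x⃗) < ω^n. -/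
open Ordinal

/-- The ordinal notation `α(x⃗) = ω^{n-1}·x₁ + ⋯ + ω·x_{n-1} + x_n < ω^n`
associated to a tuple `x⃗ ∈ ℕ^n` (here `n = m + 1 > 0`). -/
def alphaVec {m : ℕ} (x : Fin (m + 1) → ℕ) : ONote :=
  (List.ofFn fun i : Fin (m + 1) =>
    (ONote.omega ^ (ONote.ofNat (m - (i : ℕ))) * ONote.ofNat (x i))).sum

/-- Decrement the last coordinate of a tuple: `x⃗ − 1`. -/
def decLast {m : ℕ} (x : Fin (m + 1) → ℕ) : Fin (m + 1) → ℕ :=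
  Function.update x (Fin.last m) (x (Fin.last m) - 1)

/-! The notation `alphaVec x` is in Cantor normal form and denotes the base-`ω` numeral with
digits `x`, so every normal-form notation below `ω ^ (m + 1)` is some `alphaVec x'`: this gives
the `x⃗'` of the limit case. A base-`ω` numeral is a successor exactly when its last digit is
positive, and then its predecessor is `α(x⃗ − 1)`. In that case `A(x⃗, ·)` is the `(y + 1)`-fold
iterate of `A(x⃗ − 1, ·)` at `1`, which is what `K_f` computes from a stack of `y + 1` copies of
the predecessor. Well-founded induction on `α(x⃗)` concludes. -/

noncomputable def ofOmegaDigits : List ℕ → Ordinal.{0}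
  | [] => 0
  | d :: l => ω ^ l.length * d + ofOmegaDigits l

@[simp] theorem ofOmegaDigits_nil : ofOmegaDigits [] = 0 := rfl

@[simp] theorem ofOmegaDigits_cons (d : ℕ) (l : List ℕ) :
    ofOmegaDigits (d :: l) = ω ^ l.length * d + ofOmegaDigits l := rfl

theorem ofOmegaDigits_append_singleton (l : List ℕ) (d : ℕ) :
    ofOmegaDigits (l ++ [d]) = ω * ofOmegaDigits l + d := by
  induction l with
  | nil => simp
  | cons c l ih =>
    simp only [List.cons_append, ofOmegaDigits_cons, ih, List.length_append, List.length_singleton,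
      pow_succ', mul_assoc, mul_add, add_assoc]

theorem ofOmegaDigits_eq_zero_iff {l : List ℕ} : ofOmegaDigits l = 0 ↔ ∀ d ∈ l, d = 0 := by
  induction l with
  | nil => simp
  | cons c l ih => simp [ih, omega0_ne_zero]

theorem ofOmegaDigits_lt (l : List ℕ) : ofOmegaDigits l < ω ^ l.length := by
  induction l with
  | nil => simp
  | cons d l ih =>
    calc ω ^ l.length * d + ofOmegaDigits l < ω ^ l.length * d + ω ^ l.length := by gcongr
      _ = ω ^ l.length * (d + 1 : ℕ) := by push_cast; rw [mul_add_one]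
      _ ≤ ω ^ l.length * ω := by gcongr; exact (natCast_lt_omega0 _).le
      _ = ω ^ (d :: l).length := by rw [List.length_cons, pow_succ]

theorem exists_ofOmegaDigits_eq (k : ℕ) {o : Ordinal.{0}} (ho : o < ω ^ k) :
    ∃ l : List ℕ, l.length = k ∧ ofOmegaDigits l = o := by
  induction k generalizing o with
  | zero => exact ⟨[], rfl, by simp_all⟩
  | succ k ih =>
    have hpos : ω ^ k ≠ 0 := pow_ne_zero _ omega0_ne_zero
    obtain ⟨d, hd⟩ := lt_omega0.1 ((lt_mul_iff_div_lt hpos).1 (by rwa [← pow_succ]))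
    obtain ⟨l, hl, hlo⟩ := ih (mod_lt o hpos)
    exact ⟨d :: l, by simp [hl], by rw [ofOmegaDigits_cons, hl, hlo, ← hd, div_add_mod]⟩

namespace ONote

instance nf_omega : NF omega := inferInstanceAs (NF (oadd 1 1 0))

@[simp] theorem repr_omega : repr omega = ω := by simp [omega]

theorem eq_zero_of_fundamentalSequence_eq_none {o : ONote}
    (h : o.fundamentalSequence = Sum.inl none) : o = 0 := by
  have hp := fundamentalSequence_has_prop o
  rwa [h, fundamentalSequenceProp_inl_none] at hp

theorem repr_lt_of_fundamentalSequence_eq_some {o a : ONote}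
    (h : o.fundamentalSequence = Sum.inl (some a)) : a.repr < o.repr := by
  have hp := fundamentalSequence_has_prop o
  rw [h, fundamentalSequenceProp_inl_some] at hp
  exact hp.1 ▸ Order.lt_succ _

theorem repr_lt_of_fundamentalSequence_eq_inr {o : ONote} {g : ℕ → ONote}
    (h : o.fundamentalSequence = Sum.inr g) (i : ℕ) : (g i).repr < o.repr := by
  have hp := fundamentalSequence_has_prop o
  rw [h, fundamentalSequenceProp_inr] at hp
  exact (hp.2.1 i).2.1

theorem nf_of_fundamentalSequence_eq_inr {o : ONote} [o.NF] {g : ℕ → ONote}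
    (h : o.fundamentalSequence = Sum.inr g) (i : ℕ) : (g i).NF := by
  have hp := fundamentalSequence_has_prop o
  rw [h, fundamentalSequenceProp_inr] at hp
  exact (hp.2.1 i).2.2 inferInstance

end ONote

theorem alphaVec_fin_one (x : Fin 1 → ℕ) :
    alphaVec x = ONote.omega ^ ONote.ofNat 0 * ONote.ofNat (x 0) + 0 := rfl

theorem alphaVec_succ {k : ℕ} (x : Fin (k + 2) → ℕ) :
    alphaVec x = ONote.omega ^ ONote.ofNat (k + 1) * ONote.ofNat (x 0) + alphaVec (Fin.tail x) := by
  rw [alphaVec, alphaVec, List.ofFn_succ, List.sum_cons]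
  congr 3 with i
  rw [Fin.val_succ, Nat.add_sub_add_right]
  rfl

instance nf_alphaVec {m : ℕ} (x : Fin (m + 1) → ℕ) : ONote.NF (alphaVec x) := by
  induction m with
  | zero => rw [alphaVec_fin_one]; infer_instance
  | succ k ih => rw [alphaVec_succ]; infer_instance

theorem repr_alphaVec {m : ℕ} (x : Fin (m + 1) → ℕ) :
    (alphaVec x).repr = ofOmegaDigits (List.ofFn x) := by
  induction m with
  | zero => simp [alphaVec_fin_one, ONote.repr_add, ONote.repr_mul, ONote.repr_opow]
  | succ k ih =>
    rw [alphaVec_succ, ONote.repr_add, ONote.repr_mul, ONote.repr_opow, ih, List.ofFn_succ,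
      ofOmegaDigits_cons]
    simp [Fin.tail, pow_succ]

theorem repr_alphaVec_eq_omega0_mul_add {m : ℕ} (x : Fin (m + 1) → ℕ) :
    (alphaVec x).repr = ω * ofOmegaDigits (List.ofFn (Fin.init x)) + x (Fin.last m) := by
  rw [repr_alphaVec, List.ofFn_succ', List.concat_eq_append, ofOmegaDigits_append_singleton]
  rfl

theorem init_decLast {m : ℕ} (x : Fin (m + 1) → ℕ) : Fin.init (decLast x) = Fin.init x := by
  ext i
  exact Function.update_of_ne (Fin.castSucc_lt_last i).ne _ _

theorem decLast_last {m : ℕ} (x : Fin (m + 1) → ℕ) :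
    decLast x (Fin.last m) = x (Fin.last m) - 1 :=
  Function.update_self ..

theorem alphaVec_eq_zero_iff {m : ℕ} {x : Fin (m + 1) → ℕ} : alphaVec x = 0 ↔ ∀ i, x i = 0 := by
  rw [← ONote.repr_inj, ONote.repr_zero, repr_alphaVec, ofOmegaDigits_eq_zero_iff]
  simp [Fin.forall_fin_succ]

theorem repr_alphaVec_lt {m : ℕ} (x : Fin (m + 1) → ℕ) : (alphaVec x).repr < ω ^ (m + 1) := by
  simpa [repr_alphaVec] using ofOmegaDigits_lt (List.ofFn x)

theorem exists_alphaVec_eq {m : ℕ} (o : ONote) [o.NF] (ho : o.repr < ω ^ (m + 1)) :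
    ∃ x : Fin (m + 1) → ℕ, alphaVec x = o := by
  obtain ⟨l, hl, hlo⟩ := exists_ofOmegaDigits_eq (m + 1) ho
  refine ⟨fun i => l[i.val], ?_⟩
  rw [← ONote.repr_inj, repr_alphaVec, ← hlo]
  congr
  exact List.ext_getElem (by simp [hl]) fun _ _ _ => List.getElem_ofFn ..

theorem alphaVec_fundamentalSequence_eq_some {m : ℕ} {x : Fin (m + 1) → ℕ} {β : ONote}
    (h : (alphaVec x).fundamentalSequence = Sum.inl (some β)) :
    0 < x (Fin.last m) ∧ β = alphaVec (decLast x) := by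
  have hp := ONote.fundamentalSequence_has_prop (alphaVec x)
  rw [h, ONote.fundamentalSequenceProp_inl_some] at hp
  obtain ⟨hβ, hnf⟩ := hp
  have := hnf inferInstance
  have hdec := repr_alphaVec_eq_omega0_mul_add (decLast x)
  rw [repr_alphaVec_eq_omega0_mul_add, ← init_decLast] at hβ
  rw [decLast_last] at hdec
  cases hx : x (Fin.last m) with
  | zero =>
    rw [hx, Nat.cast_zero, add_zero] at hβ
    exact ((isSuccPrelimit_mul_left isSuccLimit_omega0).succ_ne _ hβ.symm).elim
  | succ n =>
    refine ⟨n.succ_pos, ?_⟩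
    rw [hx, Nat.add_sub_cancel] at hdec
    rw [hx, Nat.cast_succ, ← add_assoc, ← Order.succ_eq_add_one, ← hdec] at hβ
    exact ONote.repr_inj.1 (Order.succ_injective hβ).symm

theorem exists_alphaVec_eq_fundamentalSequence {m : ℕ} {x : Fin (m + 1) → ℕ} {g : ℕ → ONote}
    (h : (alphaVec x).fundamentalSequence = Sum.inr g) (i : ℕ) :
    ∃ x' : Fin (m + 1) → ℕ, alphaVec x' = g i := by
  have := ONote.nf_of_fundamentalSequence_eq_inr h i
  exact exists_alphaVec_eq _
    ((ONote.repr_lt_of_fundamentalSequence_eq_inr h i).trans (repr_alphaVec_lt x))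

namespace Kstep

variable (f : ℕ → ℕ)

def Reaches (p q : List ONote × ℕ) : Prop :=
  ∃ l, (Kstep f)^[l] p = q

variable {f}

theorem Reaches.refl (p : List ONote × ℕ) : Reaches f p p := ⟨0, rfl⟩

theorem Reaches.trans {p q r : List ONote × ℕ} : Reaches f p q → Reaches f q r → Reaches f p r
  | ⟨l₁, h₁⟩, ⟨l₂, h₂⟩ => ⟨l₂ + l₁, by rw [Function.iterate_add_apply, h₁, h₂]⟩

theorem Reaches.head {p q : List ONote × ℕ} (h : Reaches f (Kstep f p) q) : Reaches f p q :=
  let ⟨l, hl⟩ := h; ⟨l + 1, hl⟩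

theorem iterate_nil (l x : ℕ) : (Kstep f)^[l] ([], x) = ([], x) :=
  Function.iterate_fixed rfl l

theorem apply_cons_append (α : ONote) (s t : List ONote) (x : ℕ) :
    Kstep f ((α :: s) ++ t, x) = ((Kstep f (α :: s, x)).1 ++ t, (Kstep f (α :: s, x)).2) := by
  simp only [List.cons_append, Kstep]
  split <;> simp

theorem Reaches.append_right {s t : List ONote} {x y : ℕ} (h : Reaches f (s, x) ([], y)) :
    Reaches f (s ++ t, x) (t, y) := by
  obtain ⟨l, hl⟩ := h
  induction l generalizing s x with
  | zero => cases hl; exact .refl _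
  | succ l ih =>
    cases s with
    | nil =>
      rw [iterate_nil] at hl
      cases hl; exact .refl _
    | cons α s =>
      rw [Function.iterate_succ_apply] at hl
      exact .head (by rw [apply_cons_append]; exact ih hl)

theorem reaches_replicate_append {β : ONote} {B : ℕ → ℕ} (hB : ∀ z, Fval f β z (B z))
    (k : ℕ) (t : List ONote) (z : ℕ) :
    Reaches f (List.replicate k β ++ t, z) (t, B^[k] z) := by
  induction k generalizing z with
  | zero => exact .refl _
  | succ k ih =>
    exact (Reaches.append_right (t := List.replicate k β ++ t) (hB z)).trans (ih (B z))

end Kstep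

section Fval

variable {f : ℕ → ℕ} {α : ONote} {x : ℕ}

theorem fval_of_fundamentalSequence_eq_none (h : α.fundamentalSequence = Sum.inl none) :
    Fval f α x (f x) :=
  ⟨1, by simp [Kstep, h]⟩

theorem fval_of_fundamentalSequence_eq_some {β : ONote} {B : ℕ → ℕ}
    (h : α.fundamentalSequence = Sum.inl (some β)) (hB : ∀ z, Fval f β z (B z)) :
    Fval f α x (B^[x + 1] 1) :=
  Kstep.Reaches.head (by simpa [Kstep, h] using Kstep.reaches_replicate_append hB (x + 1) [] 1)

theorem fval_of_fundamentalSequence_eq_inr {g : ℕ → ONote} {y : ℕ}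
    (h : α.fundamentalSequence = Sum.inr g) (hg : Fval f (g x) x y) : Fval f α x y :=
  Kstep.Reaches.head (by simp only [Kstep, h]; exact hg)

end Fval

theorem eq_iterate_of_recursion {α : Type*} {a : ℕ → α} {b : α → α} {c : α} (h0 : a 0 = b c)
    (hs : ∀ y, a (y + 1) = b (a y)) (y : ℕ) : a y = b^[y + 1] c := by
  induction y with
  | zero => exact h0
  | succ y ih => rw [hs, ih, ← Function.iterate_succ_apply' b]

/-- Any function `A : ℕ^{n+1} → ℕ` satisfying the defining recursion of the
generalized Péter–Ackermann function `A^n_f` (by cases according to whether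
`α(x⃗)` is zero, a limit, or a successor) agrees with the fast-growing
hierarchy: `A(x⃗, y) = F_{α(x⃗), f}(y)`. -/
theorem stmt_18 {m : ℕ} (f : ℕ → ℕ) (A : (Fin (m + 1) → ℕ) → ℕ → ℕ)
    (h0 : ∀ x y, (∀ i, x i = 0) → A x y = f y)
    (hlim : ∀ (x x' : Fin (m + 1) → ℕ) (y : ℕ) (g : ℕ → ONote),
      (alphaVec x).fundamentalSequence = Sum.inr g → alphaVec x' = g y →
      A x y = A x' y)
    (hsucc0 : ∀ x, 0 < x (Fin.last m) → A x 0 = A (decLast x) 1)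
    (hsucc : ∀ x y, 0 < x (Fin.last m) →
      A x (y + 1) = A (decLast x) (A x y)) :
    ∀ x y, Fval f (alphaVec x) y (A x y) := by
  intro x
  induction x using (InvImage.wf (fun x => (alphaVec x).repr) wellFounded_lt).induction with
  | _ x ih =>
    intro y
    rcases hfs : (alphaVec x).fundamentalSequence with (_ | β) | g
    · rw [h0 x y (alphaVec_eq_zero_iff.1 (ONote.eq_zero_of_fundamentalSequence_eq_none hfs))]
      exact fval_of_fundamentalSequence_eq_none hfs
    · obtain ⟨hpos, rfl⟩ := alphaVec_fundamentalSequence_eq_some hfs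
      rw [eq_iterate_of_recursion (hsucc0 x hpos) (hsucc x · hpos)]
      exact fval_of_fundamentalSequence_eq_some hfs
        (ih _ (ONote.repr_lt_of_fundamentalSequence_eq_some hfs))
    · obtain ⟨x', hx'⟩ := exists_alphaVec_eq_fundamentalSequence hfs y
      have hlt : (alphaVec x').repr < (alphaVec x).repr :=
        hx' ▸ ONote.repr_lt_of_fundamentalSequence_eq_inr hfs y
      rw [hlim x x' y g hfs hx']
      exact fval_of_fundamentalSequence_eq_inr hfs (hx' ▸ ih x' hlt y)
end
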